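/- (Feldheim–Vilenkin generating function) For every real N > 0 and all real r, θ, the series Σ_{n=0}^∞ (C_n^N(cos θ)/(2N)_n) r^n converges and equals exp(r cos θ) · j_{N-1/2}(r sin θ); equivalently, Σ_{n=0}^∞ (C_n^N(cos θ)/C_n^N(1)) r^n/n! = exp(r cos θ) j_{N-1/2}(r sin θ), where C_n^N(1) = (2N)_n/n!. -/

import Mathlib

/-!
Multiplying the exponential series of `exp (r cos θ)` by the series of `j_{N-1/2}(r sin θ)`,
which is a power series in `(r sin θ / 2)² = r² (1 - cos² θ) / 4`, and collecting powers of `r`,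
the coefficient of `r ^ n` is `∑ₖ x^(n-2k) (x² - 1)^k / ((n-2k)! k! 4^k (N+1/2)ₖ)` at
`x = cos θ`. This is `C_n^N(x) / (2N)ₙ` by Gegenbauer's explicit formula: after expanding
`(x² - 1)^k`, each coefficient reduces, through the duplication formula
`(2b)₂ₘ = 4^m (b)ₘ (b+1/2)ₘ`, to the terminating Gauss sum
`₂F₁(-p/2, (1-p)/2; b + 1/2; 1) = 2^p (b)ₚ / (2b)ₚ`, which follows from a three-term recurrence
in `p`.
-/

open Finset Polynomial
open scoped Nat

/-- The Gegenbauer polynomial `C_n^N(X)` (real parameter and argument). -/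
noncomputable def Geg (n : ℕ) (N X : ℝ) : ℝ :=
  ∑ k ∈ Finset.range (n / 2 + 1),
    (-1) ^ k * ((ascPochhammer ℝ (n - k)).eval N /
      (((n - 2 * k).factorial : ℝ) * (k.factorial : ℝ))) * (2 * X) ^ (n - 2 * k)

/-- The normalized Bessel function `j_ν(u) = Σ_k ((-1)^k/(k! (ν+1)_k)) (u/2)^(2k)`. -/
noncomputable def besselj (ν u : ℝ) : ℝ :=
  ∑' k : ℕ, (-1) ^ k / ((k.factorial : ℝ) * (ascPochhammer ℝ k).eval (ν + 1)) * (u / 2) ^ (2 * k)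

section Pochhammer

variable {S : Type*} [CommSemiring S]

theorem ascPochhammer_eval_add (m n : ℕ) (x : S) :
    (ascPochhammer S (m + n)).eval x =
      (ascPochhammer S m).eval x * (ascPochhammer S n).eval (x + m) := by
  rw [← ascPochhammer_mul, eval_mul, eval_comp]
  simp

theorem ascPochhammer_succ_eval_left (n : ℕ) (x : S) :
    (ascPochhammer S (n + 1)).eval x = x * (ascPochhammer S n).eval (x + 1) := by
  rw [add_comm, ascPochhammer_eval_add]
  simp

variable {K : Type*} [Field K] [CharZero K]

theorem ascPochhammer_eval_two_mul (n : ℕ) (x : K) :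
    (ascPochhammer K (2 * n)).eval (2 * x) =
      4 ^ n * (ascPochhammer K n).eval x * (ascPochhammer K n).eval (x + 1 / 2) := by
  induction n with
  | zero => simp
  | succ n ih =>
    rw [show 2 * (n + 1) = 2 * n + 1 + 1 by ring, ascPochhammer_succ_eval,
      ascPochhammer_succ_eval, ih, ascPochhammer_succ_eval, ascPochhammer_succ_eval]
    push_cast
    ring

theorem factorial_two_mul_eq_ascPochhammer_half (n : ℕ) :
    ((2 * n)! : K) = 4 ^ n * n ! * (ascPochhammer K n).eval (1 / 2) := by
  have h := ascPochhammer_eval_two_mul n (1 / 2 : K)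
  rwa [mul_one_div_cancel two_ne_zero, ascPochhammer_eval_one, add_halves,
    ascPochhammer_eval_one, mul_right_comm] at h

end Pochhammer

/-- The terminating hypergeometric series `₂F₁(-p/2, (1-p)/2; b + 1/2; 1)`. -/
noncomputable def evenBinomialSum (p : ℕ) (b : ℝ) : ℝ :=
  ∑ i ∈ range (p + 1),
    (p.choose (2 * i) : ℝ) * (ascPochhammer ℝ i).eval (1 / 2) /
      (ascPochhammer ℝ i).eval (b + 1 / 2)

theorem evenBinomialSum_succ_succ (q : ℕ) (b : ℝ) :
    evenBinomialSum (q + 2) b =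
      evenBinomialSum (q + 1) b + (q + 1) / (2 * b + 1) * evenBinomialSum q (b + 1) := by
  -- Pascal's rule for `(q + 2).choose (2 * i + 2)`; the odd half is a term of the sum at `q, b+1`.
  have hsplit : ∀ i,
      ((q + 2).choose (2 * (i + 1)) : ℝ) * (ascPochhammer ℝ (i + 1)).eval (1 / 2) /
        (ascPochhammer ℝ (i + 1)).eval (b + 1 / 2) =
      (q + 1) / (2 * b + 1) * ((q.choose (2 * i) : ℝ) * (ascPochhammer ℝ i).eval (1 / 2) /
        (ascPochhammer ℝ i).eval (b + 1 + 1 / 2)) +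
      ((q + 1).choose (2 * (i + 1)) : ℝ) * (ascPochhammer ℝ (i + 1)).eval (1 / 2) /
        (ascPochhammer ℝ (i + 1)).eval (b + 1 / 2) := by
    intro i
    have hc : ((q + 1).choose (2 * i + 1) : ℝ) * (2 * i + 1) = (q + 1) * q.choose (2 * i) := by
      exact_mod_cast (Nat.add_one_mul_choose_eq q (2 * i)).symm
    rw [show 2 * (i + 1) = 2 * i + 1 + 1 by ring, Nat.choose_succ_succ, Nat.cast_add, add_mul,
      add_div, ascPochhammer_succ_eval (S := ℝ) i (1 / 2),
      ascPochhammer_succ_eval_left i (b + 1 / 2), add_right_comm b]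
    congr 1
    rw [show 2 * b + 1 = 2 * (b + 1 / 2) by ring]
    set a := (ascPochhammer ℝ i).eval (1 / 2 : ℝ)
    have h : ((q + 1).choose (2 * i + 1) : ℝ) * (a * (1 / 2 + i)) =
        (q + 1) * q.choose (2 * i) * a / 2 := by
      linear_combination a / 2 * hc
    rw [h]
    -- so that `ring` treats `(b + 1 / 2)⁻¹` as an atom
    generalize b + 1 / 2 = β
    ring
  unfold evenBinomialSum
  rw [sum_range_succ' _ (q + 2), sum_congr rfl fun i _ => hsplit i, sum_add_distrib, ← mul_sum,
    sum_range_succ _ (q + 1), sum_range_succ _ (q + 1)]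
  conv_rhs => rw [sum_range_succ']
  simp only [Nat.choose_eq_zero_of_lt (by omega : q + 1 < 2 * (q + 1 + 1)),
    Nat.choose_eq_zero_of_lt (by omega : q < 2 * (q + 1)), mul_zero, Nat.choose_zero_right,
    Nat.cast_zero, Nat.cast_one, zero_mul, zero_div, add_zero]
  ring

theorem evenBinomialSum_eq (p : ℕ) {b : ℝ} (hb : 0 < b) :
    evenBinomialSum p b =
      2 ^ p * (ascPochhammer ℝ p).eval b / (ascPochhammer ℝ p).eval (2 * b) := by
  induction p using Nat.twoStepInduction generalizing b with
  | zero => simp [evenBinomialSum]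
  | one => simp [evenBinomialSum, sum_range_succ, hb.ne']
  | more q ih₀ ih₁ =>
    rw [evenBinomialSum_succ_succ, ih₁ hb, ih₀ (by linarith)]
    have h₁ : (ascPochhammer ℝ (q + 1)).eval b = b * (ascPochhammer ℝ q).eval (b + 1) :=
      ascPochhammer_succ_eval_left q b
    have h₂ : (ascPochhammer ℝ (q + 2)).eval b =
        b * (ascPochhammer ℝ q).eval (b + 1) * (b + (q + 1)) := by
      rw [ascPochhammer_succ_eval, h₁]
      push_cast
      ring
    have h₃ : (ascPochhammer ℝ (q + 2)).eval (2 * b) =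
        2 * b * (2 * b + 1) * (ascPochhammer ℝ q).eval (2 * b + 2) := by
      rw [ascPochhammer_succ_eval_left, ascPochhammer_succ_eval_left, add_assoc]
      norm_num
      ring
    have h₄ : (ascPochhammer ℝ (q + 1)).eval (2 * b) =
        2 * b * (2 * b + 1) * (ascPochhammer ℝ q).eval (2 * b + 2) / (2 * b + (q + 1)) := by
      rw [← h₃, ascPochhammer_succ_eval (q + 1)]
      push_cast
      field_simp
    rw [h₁, h₂, h₃, h₄, show 2 * (b + 1) = 2 * b + 2 by ring]
    field_simp
    ring

theorem sum_range_div_two_inv_factorial_mul_ascPochhammer (p : ℕ) {b : ℝ} (hb : 0 < b) :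
    ∑ i ∈ range (p / 2 + 1),
      1 / ((p - 2 * i)! * i ! * 4 ^ i * (ascPochhammer ℝ i).eval (b + 1 / 2)) =
      2 ^ p * (ascPochhammer ℝ p).eval b / (p ! * (ascPochhammer ℝ p).eval (2 * b)) := by
  have hterm : ∀ i ∈ range (p / 2 + 1),
      1 / ((p - 2 * i)! * i ! * 4 ^ i * (ascPochhammer ℝ i).eval (b + 1 / 2)) =
      (p.choose (2 * i) : ℝ) * (ascPochhammer ℝ i).eval (1 / 2) /
        (ascPochhammer ℝ i).eval (b + 1 / 2) / p ! := by
    intro i hi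
    have h2i : 2 * i ≤ p := by simp only [mem_range] at hi; omega
    have hfac : (p ! : ℝ) =
        p.choose (2 * i) * (4 ^ i * i ! * (ascPochhammer ℝ i).eval (1 / 2)) * (p - 2 * i)! := by
      rw [← factorial_two_mul_eq_ascPochhammer_half]
      exact_mod_cast (Nat.choose_mul_factorial_mul_factorial h2i).symm
    have hhalf := ascPochhammer_pos i (1 / 2 : ℝ) (by norm_num)
    have hc : (0 : ℝ) < p.choose (2 * i) := by exact_mod_cast Nat.choose_pos h2i
    rw [hfac]
    field_simp
  have hvanish : ∀ i ∈ range (p + 1), i ∉ range (p / 2 + 1) →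
      (p.choose (2 * i) : ℝ) * (ascPochhammer ℝ i).eval (1 / 2) /
        (ascPochhammer ℝ i).eval (b + 1 / 2) = 0 := by
    intro i _ hi
    rw [Nat.choose_eq_zero_of_lt (by simp only [mem_range] at hi; omega), Nat.cast_zero, zero_mul,
      zero_div]
  rw [sum_congr rfl hterm, ← sum_div,
    sum_subset (range_subset_range.mpr (by omega : p / 2 + 1 ≤ p + 1)) hvanish,
    ← evenBinomialSum, evenBinomialSum_eq p hb, div_div, mul_comm (p ! : ℝ)]

theorem sum_range_gegenbauer_coeff {N : ℝ} (hN : 0 < N) (j p : ℕ) :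
    ∑ i ∈ range (p / 2 + 1), ((j + i).choose j : ℝ) /
        ((p - 2 * i)! * (j + i)! * 4 ^ (j + i) * (ascPochhammer ℝ (j + i)).eval (N + 1 / 2)) =
      (ascPochhammer ℝ (j + p)).eval N * 2 ^ p /
        (p ! * j ! * (ascPochhammer ℝ (2 * j + p)).eval (2 * N)) := by
  have hterm : ∀ i ∈ range (p / 2 + 1), ((j + i).choose j : ℝ) /
      ((p - 2 * i)! * (j + i)! * 4 ^ (j + i) * (ascPochhammer ℝ (j + i)).eval (N + 1 / 2)) =
      1 / (j ! * 4 ^ j * (ascPochhammer ℝ j).eval (N + 1 / 2)) *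
        (1 / ((p - 2 * i)! * i ! * 4 ^ i * (ascPochhammer ℝ i).eval (N + j + 1 / 2))) := by
    intro i _
    have hfac : ((j + i)! : ℝ) = (j + i).choose j * j ! * i ! := by
      have h := Nat.choose_mul_factorial_mul_factorial (Nat.le_add_right j i)
      rw [Nat.add_sub_cancel_left] at h
      exact_mod_cast h.symm
    have hc : (0 : ℝ) < (j + i).choose j := by
      exact_mod_cast Nat.choose_pos (Nat.le_add_right j i)
    rw [hfac, ascPochhammer_eval_add, pow_add, show N + 1 / 2 + j = N + j + 1 / 2 by ring]
    field_simp
  rw [sum_congr rfl hterm, ← mul_sum,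
    sum_range_div_two_inv_factorial_mul_ascPochhammer p (by positivity : 0 < N + j),
    ascPochhammer_eval_add j p N, ascPochhammer_eval_add (2 * j) p (2 * N),
    ascPochhammer_eval_two_mul]
  have h₁ := ascPochhammer_pos j N hN
  push_cast
  rw [show 2 * N + 2 * j = 2 * (N + j) by ring]
  field_simp

theorem geg_div_ascPochhammer_eval_eq_sum {N : ℝ} (hN : 0 < N) (n : ℕ) (x : ℝ) :
    Geg n N x / (ascPochhammer ℝ n).eval (2 * N) =
      ∑ k ∈ range (n / 2 + 1), x ^ (n - 2 * k) * (x ^ 2 - 1) ^ k /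
        ((n - 2 * k)! * k ! * 4 ^ k * (ascPochhammer ℝ k).eval (N + 1 / 2)) := by
  have hexpand : ∀ k ∈ range (n / 2 + 1), x ^ (n - 2 * k) * (x ^ 2 - 1) ^ k /
      ((n - 2 * k)! * k ! * 4 ^ k * (ascPochhammer ℝ k).eval (N + 1 / 2)) =
      ∑ j ∈ range (k + 1), (-1) ^ j * x ^ (n - 2 * j) * ((k.choose j : ℝ) /
        ((n - 2 * k)! * k ! * 4 ^ k * (ascPochhammer ℝ k).eval (N + 1 / 2))) := by
    intro k hk
    rw [show x ^ 2 - 1 = -1 + x ^ 2 by ring, add_pow, mul_sum, sum_div]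
    refine sum_congr rfl fun j hj => ?_
    have hx : x ^ (n - 2 * k) * (x ^ 2) ^ (k - j) = x ^ (n - 2 * j) := by
      rw [← pow_mul, ← pow_add]
      congr 1
      simp only [mem_range] at hk hj
      omega
    rw [← hx]
    ring
  rw [sum_congr rfl hexpand]
  simp only [range_eq_Ico]
  rw [← sum_Ico_Ico_comm, Geg, sum_div, range_eq_Ico]
  refine sum_congr rfl fun j hj => ?_
  rw [sum_Ico_eq_sum_range, ← mul_sum]
  obtain ⟨p, rfl⟩ : ∃ p, n = 2 * j + p := ⟨n - 2 * j, by simp only [mem_Ico] at hj; omega⟩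
  have hfac : ∀ i ∈ range ((2 * j + p) / 2 + 1 - j), ((j + i).choose j : ℝ) /
      ((2 * j + p - 2 * (j + i))! * (j + i)! * 4 ^ (j + i) *
        (ascPochhammer ℝ (j + i)).eval (N + 1 / 2)) = ((j + i).choose j : ℝ) /
      ((p - 2 * i)! * (j + i)! * 4 ^ (j + i) * (ascPochhammer ℝ (j + i)).eval (N + 1 / 2)) := by
    intro i _
    rw [show 2 * j + p - 2 * (j + i) = p - 2 * i by omega]
  rw [sum_congr rfl hfac, show (2 * j + p) / 2 + 1 - j = p / 2 + 1 by omega,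
    sum_range_gegenbauer_coeff hN j p, show 2 * j + p - j = j + p by omega,
    show 2 * j + p - 2 * j = p by omega, mul_pow]
  field_simp

theorem min_le_ascPochhammer_eval {a : ℝ} (ha : 0 < a) (k : ℕ) :
    min a 1 ≤ (ascPochhammer ℝ k).eval a := by
  induction k with
  | zero => simp
  | succ k ih =>
    rw [ascPochhammer_succ_eval]
    rcases Nat.eq_zero_or_pos k with rfl | hk
    · simp
    · have hk1 : (1 : ℝ) ≤ a + k := by
        have : (1 : ℝ) ≤ k := by exact_mod_cast hk
        linarith
      exact ih.trans (le_mul_of_one_le_right (ascPochhammer_pos k a ha).le hk1)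

theorem summable_norm_besselj_term {ν : ℝ} (hν : -1 < ν) (u : ℝ) :
    Summable fun k : ℕ =>
      ‖(-1) ^ k / ((k ! : ℝ) * (ascPochhammer ℝ k).eval (ν + 1)) * (u / 2) ^ (2 * k)‖ := by
  have ha : 0 < ν + 1 := by linarith
  refine .of_nonneg_of_le (fun k => norm_nonneg _) (fun k => ?_)
    ((Real.summable_pow_div_factorial ((u / 2) ^ 2)).mul_left (min (ν + 1) 1)⁻¹)
  have hP := ascPochhammer_pos k _ ha
  calc _ = ((u / 2) ^ 2) ^ k / (k ! * (ascPochhammer ℝ k).eval (ν + 1)) := by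
        rw [pow_mul, norm_mul, norm_div, norm_pow, norm_neg, norm_one, one_pow,
          Real.norm_of_nonneg (by positivity), Real.norm_of_nonneg (by positivity)]
        ring
    _ ≤ ((u / 2) ^ 2) ^ k / (k ! * min (ν + 1) 1) := by
        gcongr
        exact min_le_ascPochhammer_eval ha k
    _ = _ := by ring

theorem hasSum_besselj {ν : ℝ} (hν : -1 < ν) (u : ℝ) :
    HasSum (fun k : ℕ =>
      (-1) ^ k / ((k ! : ℝ) * (ascPochhammer ℝ k).eval (ν + 1)) * (u / 2) ^ (2 * k))
      (besselj ν u) :=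
  (summable_norm_besselj_term hν u).of_norm.hasSum

theorem hasSum_sum_range_div_two_mul {R : Type*} [NormedRing R] [CompleteSpace R] {f g : ℕ → R}
    {a b : R} (hf : HasSum f a) (hg : HasSum g b) (hf' : Summable (‖f ·‖))
    (hg' : Summable (‖g ·‖)) :
    HasSum (fun n => ∑ k ∈ range (n / 2 + 1), f (n - 2 * k) * g k) (a * b) := by
  let G : ℕ × ℕ → R := fun p => if 2 * p.2 ≤ p.1 then f (p.1 - 2 * p.2) * g p.2 else 0
  have hinj : Function.Injective fun p : ℕ × ℕ => (p.1 + 2 * p.2, p.2) := by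
    intro p q h
    simp only [Prod.mk.injEq] at h
    exact Prod.ext (by omega) h.2
  have hcomp : G ∘ (fun p : ℕ × ℕ => (p.1 + 2 * p.2, p.2)) = fun p => f p.1 * g p.2 := by
    funext p
    simp [G]
  have hG : HasSum G (a * b) := by
    refine (hinj.hasSum_iff fun ⟨n, k⟩ hnk => if_neg fun h => ?_).mp
      (hcomp ▸ hf.mul hg (summable_mul_of_summable_norm hf' hg'))
    exact hnk ⟨(n - 2 * k, k), Prod.ext (Nat.sub_add_cancel h) rfl⟩
  refine hG.prod_fiberwise fun n => ?_
  have h : HasSum (fun k => G (n, k)) (∑ k ∈ range (n / 2 + 1), G (n, k)) :=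
    hasSum_sum_of_ne_finset_zero fun k hk => if_neg (by simp only [mem_range] at hk; omega)
  convert h using 1
  exact sum_congr rfl fun k hk => (if_pos (by simp only [mem_range] at hk; omega)).symm

/-- Feldheim–Vilenkin generating function:
`Σ_n (C_n^N(cos θ)/(2N)_n) r^n = exp(r cos θ) j_(N-1/2)(r sin θ)`
(equivalently `Σ_n (C_n^N(cos θ)/C_n^N(1)) r^n/n!` with `C_n^N(1) = (2N)_n/n!`). -/
theorem feldheim_vilenkin (N : ℝ) (hN : 0 < N) (r θ : ℝ) :
    HasSum (fun n : ℕ => Geg n N (Real.cos θ) / (ascPochhammer ℝ n).eval (2 * N) * r ^ n)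
      (Real.exp (r * Real.cos θ) * besselj (N - 1 / 2) (r * Real.sin θ)) := by
  set c := Real.cos θ
  have hexp : HasSum (fun m : ℕ => (r * c) ^ m / m !) (Real.exp (r * c)) := by
    rw [Real.exp_eq_exp_ℝ]
    exact NormedSpace.expSeries_div_hasSum_exp (r * c)
  have hexp_norm : Summable fun m : ℕ => ‖(r * c) ^ m / (m ! : ℝ)‖ := by
    simpa [norm_div, norm_pow] using Real.summable_pow_div_factorial |r * c|
  have hν : -1 < N - 1 / 2 := by linarith
  refine (hasSum_sum_range_div_two_mul hexp (hasSum_besselj hν _) hexp_norm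
    (summable_norm_besselj_term hν _)).congr_fun fun n => ?_
  rw [geg_div_ascPochhammer_eval_eq_sum hN, sum_mul]
  refine sum_congr rfl fun k hk => ?_
  have hsin : (r * Real.sin θ / 2) ^ (2 * k) = (r ^ 2) ^ k * (1 - c ^ 2) ^ k / 4 ^ k := by
    have hs2 : Real.sin θ ^ 2 = 1 - c ^ 2 := Real.sin_sq θ
    rw [pow_mul, div_pow, mul_pow, hs2, div_pow, mul_pow]
    norm_num
  have hsign : (c ^ 2 - 1) ^ k = (-1) ^ k * (1 - c ^ 2) ^ k := by
    rw [← mul_pow]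
    ring
  have hr : r ^ n = r ^ (n - 2 * k) * (r ^ 2) ^ k := by
    rw [← pow_mul, ← pow_add]
    congr 1
    simp only [mem_range] at hk
    omega
  rw [hsin, hsign, hr, mul_pow, show N - 1 / 2 + 1 = N + 1 / 2 by ring]
  ring
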